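/- Let p, n, k be positive integers with p ≥ 2, let S ⊆ {1,…,p} with |S| = k. Let L : ℝ^p → ℝ be differentiable and satisfy the local RSC inequality ⟨∇L(β+Δ) − ∇L(β), Δ⟩ ≥ α₁‖Δ‖₂² − τ₁ (log p / n)‖Δ‖₁² for all β ∈ ℝ^p and all Δ with ‖Δ‖₂ ≤ 1, where α₁ > 0 and τ₁ ≥ 0, and let ρ : ℝ → ℝ be μ-amenable with 0 ≤ μ < α₁; set q(t) := λ|t| − ρ(t), ρ(β) := Σ_{j=1}^p ρ(β_j), ∇q(β) := (q'(β_j))_{j=1}^p. Suppose β̂ ∈ ℝ^p satisfies supp(β̂) ⊆ S, ‖β̂‖₁ ≤ R, and ∇L(β̂) − ∇q(β̂) + λẑ = 0 for some ẑ ∈ ℝ^p with ẑ_S ∈ ∂‖β̂_S‖₁ and max_{j ∉ S}|ẑ_j| ≤ 1 − δ, where δ ∈ (0,1]. Let β̃ be a stationary point of the program min_{‖β‖₁ ≤ R} {L(β) + ρ(β)} with ‖β̃ − β̂‖₂ ≤ 1. If λ ≥ 4Rτ₁ log p/(δn), then ‖β̃ − β̂‖₁ ≤ (4/δ + 2)·√k·‖β̃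 − β̂‖₂. -/

import Mathlib

open scoped BigOperators

/-- A function `ρ : ℝ → ℝ` is `μ`-amenable (with selection parameter `lam > 0`):
(i) symmetric around zero with `ρ 0 = 0`; (ii) nondecreasing on `[0, ∞)`;
(iii) `t ↦ ρ t / t` nonincreasing on `(0, ∞)`; (iv) differentiable away from `0`;
(v) `t ↦ ρ t + μ/2 t²` convex; (vi) `ρ'(t) → lam` as `t → 0⁺`. -/
structure Amenable (lam mu : ℝ) (ρ : ℝ → ℝ) : Prop where
  symm : ∀ t : ℝ, ρ (-t) = ρ t
  zero : ρ 0 = 0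
  mono : MonotoneOn ρ (Set.Ici (0 : ℝ))
  ratio : AntitoneOn (fun t => ρ t / t) (Set.Ioi (0 : ℝ))
  diff : ∀ t : ℝ, t ≠ 0 → DifferentiableAt ℝ ρ t
  conv : ConvexOn ℝ Set.univ (fun t => ρ t + mu / 2 * t ^ 2)
  deriv_lim : Filter.Tendsto (deriv ρ) (nhdsWithin 0 (Set.Ioi 0)) (nhds lam)


open scoped RealInnerProductSpace

/-- The ℓ₁-norm on `ℝ^p`. -/
noncomputable def norm1 {p : ℕ} (x : EuclideanSpace ℝ (Fin p)) : ℝ := ∑ j, |x j|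

/-- The ℓ_∞-norm on `ℝ^p`. -/
noncomputable def normInf {p : ℕ} (x : EuclideanSpace ℝ (Fin p)) : ℝ := ⨆ j, |x j|

/-- The subdifferential of the ℓ₁-norm at `x`: vectors `v` with `‖v‖_∞ ≤ 1` and
`⟨v, x⟩ = ‖x‖₁`. -/
def l1Subdiff {m : Type*} [Fintype m] (x : m → ℝ) : Set (m → ℝ) :=
  {v | (∀ j, |v j| ≤ 1) ∧ ∑ j, v j * x j = ∑ j, |x j|}

/-- The `(α, τ)`-RSC condition for a loss `L` with parameters `α₁, α₂, τ₁, τ₂` (and `n`, `p`). -/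
def RSCCond (p n : ℕ) (α₁ α₂ τ₁ τ₂ : ℝ) (L : EuclideanSpace ℝ (Fin p) → ℝ) : Prop :=
  ∀ β Δ : EuclideanSpace ℝ (Fin p),
    (‖Δ‖ ≤ 1 → α₁ * ‖Δ‖ ^ 2 - τ₁ * (Real.log p / n) * (norm1 Δ) ^ 2 ≤
      ⟪gradient L (β + Δ) - gradient L β, Δ⟫) ∧
    (1 ≤ ‖Δ‖ → α₂ * ‖Δ‖ - τ₂ * Real.sqrt (Real.log p / n) * norm1 Δ ≤
      ⟪gradient L (β + Δ) - gradient L β, Δ⟫)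

/-- The derivative of `q(t) = λ|t| − ρ(t)`. -/
noncomputable def qDeriv (lam : ℝ) (ρ : ℝ → ℝ) (t : ℝ) : ℝ :=
  deriv (fun u => lam * |u| - ρ u) t

/-- `βt` is a stationary point of the program `min_{‖β‖₁ ≤ R} L β + Σⱼ ρ(βⱼ)`:
`‖βt‖₁ ≤ R` and there is `z ∈ ∂‖βt‖₁` with
`⟨∇L(βt) − ∇q(βt) + λ z, β − βt⟩ ≥ 0` for all feasible `β`. -/
def IsStationaryPt {p : ℕ} (L : EuclideanSpace ℝ (Fin p) → ℝ) (ρ : ℝ → ℝ) (lam R : ℝ)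
    (βt : EuclideanSpace ℝ (Fin p)) : Prop :=
  norm1 βt ≤ R ∧ ∃ z : Fin p → ℝ, z ∈ l1Subdiff (fun j => βt j) ∧
    ∀ β : EuclideanSpace ℝ (Fin p), norm1 β ≤ R →
      0 ≤ ∑ j, (gradient L βt j - qDeriv lam ρ (βt j) + lam * z j) * (β j - βt j)

/-!
Write `Δ = β̃ - β̂`. Testing the stationarity of `β̃` against `β̂` and subtracting the
zero-subgradient condition at `β̂` bounds the RSC quantity `⟪∇L(β̃) - ∇L(β̂), Δ⟫` by
`⟪∇q(β̃) - ∇q(β̂), Δ⟫ + λ⟪ẑ - z̃, Δ⟫`. Amenability makes `t ↦ μt - q'(t)` monotone, so the first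
term is at most `μ‖Δ‖₂²`; strict dual feasibility of `ẑ` together with the subgradient inequality
for `z̃` bounds the second by `λ(2‖Δ_S‖₁ - δ‖Δ_Sᶜ‖₁)`. Since `‖Δ‖₁ ≤ 2R`, the lower bound on `λ`
absorbs the RSC tolerance into `λδ‖Δ‖₁/2`, and `μ ≤ α₁` leaves the cone condition
`‖Δ_Sᶜ‖₁ ≤ (1 + 4/δ)‖Δ_S‖₁`. Cauchy–Schwarz on `S` gives `‖Δ_S‖₁ ≤ √k ‖Δ‖₂`.
-/

open Filter Topology

theorem deriv_neg_of_even {f : ℝ → ℝ} (hf : ∀ t, f (-t) = f t) (t : ℝ) :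
    deriv f (-t) = -deriv f t := by
  have h := deriv_comp_neg f t
  simp only [hf] at h
  linarith

theorem deriv_zero_of_even {f : ℝ → ℝ} (hf : ∀ t, f (-t) = f t) : deriv f 0 = 0 := by
  have h := deriv_neg_of_even hf 0
  rw [neg_zero] at h
  linarith

namespace Amenable

variable {lam mu : ℝ} {ρ : ℝ → ℝ}

theorem qDeriv_zero (hρ : Amenable lam mu ρ) : qDeriv lam ρ 0 = 0 :=
  deriv_zero_of_even fun t => by simp [hρ.symm]

theorem qDeriv_of_ne_zero (hρ : Amenable lam mu ρ) {t : ℝ} (ht : t ≠ 0) :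
    qDeriv lam ρ t = lam * SignType.sign t - deriv ρ t :=
  (((hasDerivAt_abs ht).const_mul lam).sub (hρ.diff t ht).hasDerivAt).deriv

theorem hasDerivAt_add_sq (hρ : Amenable lam mu ρ) {t : ℝ} (ht : t ≠ 0) :
    HasDerivAt (fun u => ρ u + mu / 2 * u ^ 2) (deriv ρ t + mu * t) t := by
  refine ((hρ.diff t ht).hasDerivAt.add ((hasDerivAt_pow 2 t).const_mul (mu / 2))).congr_deriv ?_
  push_cast
  ring

theorem deriv_add_mul_le (hρ : Amenable lam mu ρ) {a b : ℝ} (ha : a ≠ 0) (hb : b ≠ 0)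
    (hab : a < b) : deriv ρ a + mu * a ≤ deriv ρ b + mu * b := by
  have hda := hρ.hasDerivAt_add_sq ha
  have hdb := hρ.hasDerivAt_add_sq hb
  rw [← hda.deriv, ← hdb.deriv]
  exact (hρ.conv.deriv_le_slope trivial trivial hab hda.differentiableAt).trans
    (hρ.conv.slope_le_deriv trivial trivial hab hdb.differentiableAt)

theorem le_deriv_add_mul (hρ : Amenable lam mu ρ) {t : ℝ} (ht : 0 < t) :
    lam ≤ deriv ρ t + mu * t := by
  have hlim : Tendsto (fun s => deriv ρ s + mu * s) (𝓝[>] 0) (𝓝 lam) := by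
    simpa using hρ.deriv_lim.add
      (((continuous_const_mul mu).tendsto 0).mono_left nhdsWithin_le_nhds)
  refine le_of_tendsto hlim ?_
  filter_upwards [Ioo_mem_nhdsGT ht] with s hs
  exact hρ.deriv_add_mul_le hs.1.ne' ht.ne' hs.2

theorem deriv_add_mul_le_neg (hρ : Amenable lam mu ρ) {t : ℝ} (ht : t < 0) :
    deriv ρ t + mu * t ≤ -lam := by
  have h := hρ.le_deriv_add_mul (neg_pos.2 ht)
  have hodd := deriv_neg_of_even hρ.symm (-t)
  rw [neg_neg] at hodd
  linarith

theorem monotone_mul_sub_qDeriv (hρ : Amenable lam mu ρ) :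
    Monotone fun t => mu * t - qDeriv lam ρ t := by
  -- Off `0` this is `(ρ + μt²/2)' - λ sign t`: monotone on each half-line by convexity, and the
  -- jump of `λ sign t` is compensated since `(ρ + μt²/2)' → λ` at `0⁺`.
  have hpos : ∀ t, 0 < t → mu * t - qDeriv lam ρ t = deriv ρ t + mu * t - lam := fun t ht => by
    rw [hρ.qDeriv_of_ne_zero ht.ne', sign_pos ht, SignType.coe_one]
    ring
  have hneg : ∀ t, t < 0 → mu * t - qDeriv lam ρ t = deriv ρ t + mu * t + lam := fun t ht => by
    rw [hρ.qDeriv_of_ne_zero ht.ne, sign_neg ht, SignType.coe_neg_one]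
    ring
  have hzero : mu * 0 - qDeriv lam ρ 0 = 0 := by rw [hρ.qDeriv_zero]; ring
  have hnonpos : ∀ t ≤ 0, mu * t - qDeriv lam ρ t ≤ 0 := fun t ht => by
    rcases ht.lt_or_eq with ht | rfl
    · linarith [hneg t ht, hρ.deriv_add_mul_le_neg ht]
    · exact hzero.le
  have hnonneg : ∀ t ≥ 0, 0 ≤ mu * t - qDeriv lam ρ t := fun t ht => by
    rcases ht.lt_or_eq with ht | rfl
    · linarith [hpos t ht, hρ.le_deriv_add_mul ht]
    · exact hzero.ge
  intro x y hxy
  dsimp only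
  rcases hxy.eq_or_lt with rfl | hxy
  · exact le_rfl
  rcases lt_or_ge y 0 with hy | hy
  · rw [hneg x (hxy.trans hy), hneg y hy]
    linarith [hρ.deriv_add_mul_le (hxy.trans hy).ne hy.ne hxy]
  rcases le_or_gt x 0 with hx | hx
  · exact (hnonpos x hx).trans (hnonneg y hy)
  · rw [hpos x hx, hpos y (hx.trans hxy)]
    linarith [hρ.deriv_add_mul_le hx.ne' (hx.trans hxy).ne' hxy]

theorem qDeriv_sub_mul_sub_le (hρ : Amenable lam mu ρ) (a b : ℝ) :
    (qDeriv lam ρ a - qDeriv lam ρ b) * (a - b) ≤ mu * (a - b) ^ 2 := by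
  have hmono := hρ.monotone_mul_sub_qDeriv
  rcases le_total a b with hab | hab <;> nlinarith [hmono hab]

theorem sum_qDeriv_sub_mul_sub_le {ι : Type*} [Fintype ι] (hρ : Amenable lam mu ρ)
    (x y : ι → ℝ) :
    ∑ j, (qDeriv lam ρ (x j) - qDeriv lam ρ (y j)) * (x j - y j) ≤
      mu * ∑ j, (x j - y j) ^ 2 := by
  rw [Finset.mul_sum]
  exact Finset.sum_le_sum fun j _ => hρ.qDeriv_sub_mul_sub_le _ _

end Amenable

theorem mul_le_mul_abs_of_abs_le {z c : ℝ} (hz : |z| ≤ c) (y : ℝ) : z * y ≤ c * |y| :=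
  (le_abs_self _).trans (abs_mul z y ▸ mul_le_mul_of_nonneg_right hz (abs_nonneg y))

section Coordinates

variable {ι : Type*} [Fintype ι]

theorem sum_mul_sub_le_of_mem_l1Subdiff {x z : ι → ℝ} (hz : z ∈ l1Subdiff x) (y : ι → ℝ) :
    ∑ j, z j * (y j - x j) ≤ ∑ j, |y j| - ∑ j, |x j| := by
  obtain ⟨hz_le, hzx⟩ := hz
  have hzy : ∑ j, z j * y j ≤ ∑ j, |y j| :=
    Finset.sum_le_sum fun j _ => (mul_le_mul_abs_of_abs_le (hz_le j) (y j)).trans_eq (one_mul _)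
  simp only [mul_sub, Finset.sum_sub_distrib]
  linarith

theorem sum_sub_mul_sub_le_of_stationary {G G' Q Q' z z' x y : ι → ℝ} {lam : ℝ}
    (hstat : 0 ≤ ∑ j, (G j - Q j + lam * z j) * (y j - x j))
    (hzero : ∀ j, G' j - Q' j + lam * z' j = 0) :
    ∑ j, (G j - G' j) * (x j - y j) ≤
      ∑ j, (Q j - Q' j) * (x j - y j) + lam * ∑ j, (z' j - z j) * (x j - y j) := by
  rw [Finset.mul_sum, ← Finset.sum_add_distrib]
  have hsplit : ∑ j, (G j - G' j) * (x j - y j) =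
      ∑ j, ((Q j - Q' j) * (x j - y j) + lam * ((z' j - z j) * (x j - y j))) -
        ∑ j, (G j - Q j + lam * z j) * (y j - x j) := by
    rw [← Finset.sum_sub_distrib]
    exact Finset.sum_congr rfl fun j _ => by linear_combination (y j - x j) * hzero j
  linarith

variable [DecidableEq ι]

theorem sum_abs_sub_sum_abs_le_of_support_subset {S : Finset ι} {y : ι → ℝ}
    (hy : ∀ j, y j ≠ 0 → j ∈ S) (x : ι → ℝ) :
    ∑ j, |y j| - ∑ j, |x j| ≤ ∑ j ∈ S, |x j - y j| - ∑ j ∈ Sᶜ, |x j - y j| := by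
  have hSc : ∀ j ∈ Sᶜ, y j = 0 := fun j hj => by_contra fun h => Finset.mem_compl.1 hj (hy j h)
  rw [← Finset.sum_add_sum_compl S (fun j => |y j|), ← Finset.sum_add_sum_compl S (fun j => |x j|)]
  have hy_Sc : ∑ j ∈ Sᶜ, |y j| = 0 := Finset.sum_eq_zero fun j hj => by simp [hSc j hj]
  have hx_Sc : ∑ j ∈ Sᶜ, |x j - y j| = ∑ j ∈ Sᶜ, |x j| :=
    Finset.sum_congr rfl fun j hj => by rw [hSc j hj, sub_zero]
  have hS : ∑ j ∈ S, |y j| - ∑ j ∈ S, |x j| ≤ ∑ j ∈ S, |x j - y j| := by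
    rw [← Finset.sum_sub_distrib]
    exact Finset.sum_le_sum fun j _ => (abs_sub_abs_le_abs_sub _ _).trans_eq (abs_sub_comm _ _)
  linarith

theorem sum_mul_le_of_abs_le (S : Finset ι) {z : ι → ℝ} {δ : ℝ} (hS : ∀ j ∈ S, |z j| ≤ 1)
    (hSc : ∀ j ∉ S, |z j| ≤ 1 - δ) (Δ : ι → ℝ) :
    ∑ j, z j * Δ j ≤ ∑ j ∈ S, |Δ j| + (1 - δ) * ∑ j ∈ Sᶜ, |Δ j| := by
  rw [← Finset.sum_add_sum_compl S, Finset.mul_sum]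
  exact add_le_add
    (Finset.sum_le_sum fun j hj => (mul_le_mul_abs_of_abs_le (hS j hj) _).trans_eq (one_mul _))
    (Finset.sum_le_sum fun j hj => mul_le_mul_abs_of_abs_le (hSc j (Finset.mem_compl.1 hj)) _)

theorem sum_sub_mul_sub_le_of_strict_dual_feasible {S : Finset ι} {x y z z' : ι → ℝ} {δ : ℝ} (hz : z ∈ l1Subdiff x)
    (hy : ∀ j, y j ≠ 0 → j ∈ S) (hz'S : ∀ j ∈ S, |z' j| ≤ 1) (hz'Sc : ∀ j ∉ S, |z' j| ≤ 1 - δ) :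
    ∑ j, (z' j - z j) * (x j - y j) ≤
      2 * ∑ j ∈ S, |x j - y j| - δ * ∑ j ∈ Sᶜ, |x j - y j| := by
  have hz' := sum_mul_le_of_abs_le S hz'S hz'Sc fun j => x j - y j
  have hzsub := sum_mul_sub_le_of_mem_l1Subdiff hz y
  have hsupp := sum_abs_sub_sum_abs_le_of_support_subset hy x
  have hsplit : ∑ j, (z' j - z j) * (x j - y j) =
      ∑ j, z' j * (x j - y j) + ∑ j, z j * (y j - x j) := by
    rw [← Finset.sum_add_distrib]
    exact Finset.sum_congr rfl fun j _ => by ring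
  linarith

end Coordinates

open scoped RealInnerProductSpace in
theorem EuclideanSpace.real_inner_eq_sum {ι : Type*} [Fintype ι] (x y : EuclideanSpace ℝ ι) :
    ⟪x, y⟫ = ∑ j, x j * y j := by
  simp [PiLp.inner_apply, mul_comm]

theorem EuclideanSpace.sum_abs_le_sqrt_card_mul_norm {ι : Type*} [Fintype ι] (S : Finset ι)
    (x : EuclideanSpace ℝ ι) : ∑ j ∈ S, |x j| ≤ √(S.card : ℝ) * ‖x‖ := by
  have hCS := sq_sum_le_card_mul_sum_sq (s := S) (f := fun j => |x j|)
  have hS : ∑ j ∈ S, |x j| ^ 2 ≤ ‖x‖ ^ 2 := by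
    simp_rw [EuclideanSpace.real_norm_sq_eq, sq_abs]
    exact Finset.sum_le_sum_of_subset_of_nonneg S.subset_univ fun _ _ _ => sq_nonneg _
  rw [← Real.sqrt_sq (norm_nonneg x), ← Real.sqrt_mul (Nat.cast_nonneg _)]
  exact Real.le_sqrt_of_sq_le (hCS.trans (mul_le_mul_of_nonneg_left hS (Nat.cast_nonneg _)))

theorem norm1_sub_le {p : ℕ} (x y : EuclideanSpace ℝ (Fin p)) :
    norm1 (x - y) ≤ norm1 x + norm1 y := by
  rw [norm1, norm1, norm1, ← Finset.sum_add_distrib]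
  exact Finset.sum_le_sum fun j _ => abs_sub _ _

theorem cone_of_basic_inequality {a b N c lam δ mu α R : ℝ} (ha : 0 ≤ a)
    (hb : 0 ≤ b) (hc : 0 ≤ c) (hlam : 0 < lam) (hδ : 0 < δ) (hmuα : mu ≤ α)
    (hR : a + b ≤ 2 * R) (hcR : 4 * R * c ≤ lam * δ)
    (hbasic : α * N ^ 2 - c * (a + b) ^ 2 ≤ mu * N ^ 2 + lam * (2 * a - δ * b)) :
    b ≤ (1 + 4 / δ) * a := by
  have htol : c * (a + b) ^ 2 ≤ lam * δ / 2 * (a + b) := by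
    nlinarith [mul_nonneg (mul_nonneg hc (add_nonneg ha hb)) (sub_nonneg.2 hR),
      mul_nonneg (add_nonneg ha hb) (sub_nonneg.2 hcR)]
  have hgap : 0 ≤ (α - mu) * N ^ 2 := mul_nonneg (sub_nonneg.2 hmuα) (sq_nonneg N)
  have hcone : 0 ≤ lam * ((δ + 4) * a - δ * b) := by linarith
  have hcone' := (mul_nonneg_iff_of_pos_left hlam).1 hcone
  rw [show (1 + 4 / δ) * a = (δ + 4) * a / δ by field_simp, le_div_iff₀ hδ]
  linarith

theorem stationary_cone_bound (p n k : ℕ)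
    (S : Finset (Fin p)) (hS : S.card = k)
    (L : EuclideanSpace ℝ (Fin p) → ℝ)
    (α₁ τ₁ : ℝ) (hτ₁ : 0 ≤ τ₁)
    (hRSC : ∀ β Δ : EuclideanSpace ℝ (Fin p), ‖Δ‖ ≤ 1 →
      α₁ * ‖Δ‖ ^ 2 - τ₁ * (Real.log p / n) * (norm1 Δ) ^ 2 ≤
        ⟪gradient L (β + Δ) - gradient L β, Δ⟫)
    (ρ : ℝ → ℝ) (lam mu R δ : ℝ) (hlam : 0 < lam)
    (hmuα : mu < α₁) (hρ : Amenable lam mu ρ)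
    (βhat : EuclideanSpace ℝ (Fin p)) (hβhatS : ∀ j, βhat j ≠ 0 → j ∈ S)
    (hβhat1 : norm1 βhat ≤ R)
    (zhat : Fin p → ℝ)
    (hzero : ∀ j, gradient L βhat j - qDeriv lam ρ (βhat j) + lam * zhat j = 0)
    (hzS : (fun j : {j // j ∈ S} => zhat j) ∈ l1Subdiff (fun j : {j // j ∈ S} => βhat j))
    (hδ : 0 < δ)
    (hdual : ∀ j ∉ S, |zhat j| ≤ 1 - δ)
    (βt : EuclideanSpace ℝ (Fin p)) (hβt : IsStationaryPt L ρ lam R βt)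
    (hclose : ‖βt - βhat‖ ≤ 1)
    (hlam_lb : 4 * R * τ₁ * Real.log p / (δ * n) ≤ lam) :
    norm1 (βt - βhat) ≤ (4 / δ + 2) * Real.sqrt k * ‖βt - βhat‖ := by
  obtain ⟨hβt1, z, hz, hstat⟩ := hβt
  set Δ := βt - βhat
  set a := ∑ j ∈ S, |Δ j|
  set b := ∑ j ∈ Sᶜ, |Δ j|
  have hsplit : norm1 Δ = a + b := (Finset.sum_add_sum_compl S _).symm
  have hbasic : α₁ * ‖Δ‖ ^ 2 - τ₁ * (Real.log p / n) * (a + b) ^ 2 ≤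
      mu * ‖Δ‖ ^ 2 + lam * (2 * a - δ * b) := by
    have hRSC' := hRSC βhat Δ hclose
    rw [add_sub_cancel, EuclideanSpace.real_inner_eq_sum, hsplit] at hRSC'
    refine hRSC'.trans ((sum_sub_mul_sub_le_of_stationary (hstat βhat hβhat1) hzero).trans ?_)
    rw [EuclideanSpace.real_norm_sq_eq]
    exact add_le_add (hρ.sum_qDeriv_sub_mul_sub_le _ _) (mul_le_mul_of_nonneg_left
      (sum_sub_mul_sub_le_of_strict_dual_feasible hz hβhatS (fun j hj => hzS.1 ⟨j, hj⟩) hdual) hlam.le)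
  have hR : a + b ≤ 2 * R := by
    linarith [norm1_sub_le βt βhat]
  have hcone : b ≤ (1 + 4 / δ) * a := by
    refine cone_of_basic_inequality (Finset.sum_nonneg fun _ _ => abs_nonneg _)
      (Finset.sum_nonneg fun _ _ => abs_nonneg _)
      (mul_nonneg hτ₁ (div_nonneg (Real.log_natCast_nonneg p) n.cast_nonneg)) hlam hδ hmuα.le
      hR ?_ hbasic
    rwa [show 4 * R * τ₁ * Real.log p / (δ * n) = 4 * R * (τ₁ * (Real.log p / n)) / δ by ring,
      div_le_iff₀ hδ] at hlam_lb
  calc norm1 Δ = a + b := hsplit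
    _ ≤ (4 / δ + 2) * a := by linarith
    _ ≤ (4 / δ + 2) * (√k * ‖Δ‖) := by
      gcongr
      exact hS ▸ EuclideanSpace.sum_abs_le_sqrt_card_mul_norm S Δ
    _ = (4 / δ + 2) * √k * ‖Δ‖ := by ring
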